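/- Lemma 2.5 of Section 2 (estimate of I₃ for q > 2). Let n ≥ 1, q > 2, s ∈ (0,1), κ ∈ [0,1), 1 ≤ ρ₁ < ρ₂ ≤ 2, an integer m ≥ 3, m₁ > 0 and H > 0. Set ρ̃ = (ρ₂ − ρ₁)/4 and ψ(x) = ((|x|² − ρ₁²)₊)^m. Let u : ℝⁿ → ℝ be measurable with |u(x) − u(y)| ≤ H|x − y|^κ for all x, y in the closed ball B̄_{ρ₂}(0). Let x̄ ∈ B_{(ρ₁+ρ₂)/2}(0) and ȳ ∈ B_{(3ρ₂+ρ₁)/4}(0) with ā := x̄ − ȳ satisfying 0 < |ā| < ρ̃/2, and assume (i) u(x̄+z) − u(ȳ+z) − m₁ψ(x̄+z) ≤ u(x̄) − u(ȳ) − m₁ψ(x̄) for all z ∈ ℝⁿ, and (ii) m₁ψ(x̄) ≤ u(x̄) − u(ȳ). Let ε₁ ∈ (0, 1/8), η = ε₁|ā|, and let D ⊆ B_{ρ̃}(0) \ B_η(0) be measurable. Then there is a constant κ* > 0, depending only on n, q, s, κ, m, m₁ and H (and not on ε₁, |ā| or D), such that ∫_D (J_q(u(x̄) − u(x̄+z))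 − J_q(u(ȳ) − u(ȳ+z))) |z|^{−(n+sq)} dz ≥ −κ* ( ∫_η^{ρ̃} r^{κ(q−2)+1−sq} dr + |ā|^{κ(m−1)/m} ∫_η^{ρ̃} r^{κ(q−2)−sq} dr ). -/

import Mathlib

/-!
Fix `z` in the annulus `η ≤ |z| < ρ̃` and write `a = u(x̄) - u(x̄+z)`, `b = u(ȳ) - u(ȳ+z)`.
Hölder continuity gives `|a|, |b| ≤ H|z|^κ`, and the maximality (i) of `(x̄, ȳ)` gives
`b - a ≤ m₁ (ψ(x̄+z) - ψ(x̄))`. Since `ψ = g^m` with `g` Lipschitz near `x̄`, this increment is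
`≲ ψ(x̄)^{(m-1)/m} |z| + |z|²`, and (ii) with Hölder continuity bounds `ψ(x̄) ≤ (H/m₁)|ā|^κ`.
For `q ≥ 2` the map `J_q` satisfies `J_q(b) - J_q(a) ≤ (q-1) max(|a|,|b|)^{q-2} (b-a)₊`, so the
integrand is bounded below by `-C (|z|^{κ(q-2)+2} + |ā|^{κ(m-1)/m} |z|^{κ(q-2)+1}) / |z|^{n+sq}`.
Integrating this radial bound in polar coordinates over the annulus containing `D` gives the
estimate.
-/

open MeasureTheory Metric Filter

noncomputable section

def Jq (q t : ℝ) : ℝ := |t| ^ (q - 2) * t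

def locPsi (n : ℕ) (ρ₁ : ℝ) (m : ℕ) (x : EuclideanSpace ℝ (Fin n)) : ℝ :=
  (max (‖x‖ ^ 2 - ρ₁ ^ 2) 0) ^ m

lemma Real.rpow_sub_rpow_le_mul_sub {p a b : ℝ} (hp : 1 ≤ p) (ha : 0 ≤ a) (hab : a ≤ b) :
    b ^ p - a ^ p ≤ p * b ^ (p - 1) * (b - a) := by
  rcases hab.eq_or_lt with rfl | hab
  · simp
  have hslope := (convexOn_rpow hp).slope_le_of_hasDerivAt ha (ha.trans hab.le) hab
    (Real.hasDerivAt_rpow_const (Or.inr hp))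
  rw [slope_def_field, div_le_iff₀ (sub_pos.2 hab)] at hslope
  exact hslope

lemma Jq_neg (q t : ℝ) : Jq q (-t) = -Jq q t := by
  simp [Jq]

lemma Jq_of_nonneg {q t : ℝ} (hq : q ≠ 1) (ht : 0 ≤ t) : Jq q t = t ^ (q - 1) := by
  rcases ht.eq_or_lt with rfl | ht
  · simp [Jq, Real.zero_rpow (sub_ne_zero.2 hq)]
  · rw [Jq, abs_of_pos ht, ← Real.rpow_add_one ht.ne']
    ring_nf

lemma abs_Jq {q : ℝ} (hq : q ≠ 1) (t : ℝ) : |Jq q t| = |t| ^ (q - 1) := by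
  rcases le_total 0 t with ht | ht
  · rw [Jq_of_nonneg hq ht, abs_of_nonneg ht, abs_of_nonneg (Real.rpow_nonneg ht _)]
  · rw [← abs_neg, ← Jq_neg, Jq_of_nonneg hq (neg_nonneg.2 ht),
      abs_of_nonneg (Real.rpow_nonneg (neg_nonneg.2 ht) _), abs_of_nonpos ht]

lemma Jq_monotone {q : ℝ} (hq : 1 < q) : Monotone (Jq q) :=
  monotone_of_odd_of_monotoneOn_nonneg (Jq_neg q) fun a ha b hb hab => by
    rw [Jq_of_nonneg hq.ne' ha, Jq_of_nonneg hq.ne' hb]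
    exact Real.rpow_le_rpow ha hab (by linarith)

@[fun_prop]
lemma measurable_Jq (q : ℝ) : Measurable (Jq q) := by
  unfold Jq
  fun_prop

lemma abs_Jq_sub_Jq_le {q M a b : ℝ} (hq : 1 < q) (ha : |a| ≤ M) (hb : |b| ≤ M) :
    |Jq q a - Jq q b| ≤ 2 * M ^ (q - 1) := by
  have hpow {t : ℝ} (ht : |t| ≤ M) : |Jq q t| ≤ M ^ (q - 1) := by
    rw [abs_Jq hq.ne']
    exact Real.rpow_le_rpow (abs_nonneg t) ht (by linarith)
  linarith [abs_sub (Jq q a) (Jq q b), hpow ha, hpow hb]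

lemma Jq_sub_Jq_le_of_le {q a b : ℝ} (hq : 2 ≤ q) (hab : a ≤ b) :
    Jq q b - Jq q a ≤ (q - 1) * max |a| |b| ^ (q - 2) * (b - a) := by
  have hq1 : q ≠ 1 := by linarith
  have hodd {t : ℝ} (ht : t ≤ 0) : Jq q t = -(-t) ^ (q - 1) := by
    rw [← neg_neg (Jq q t), ← Jq_neg, Jq_of_nonneg hq1 (neg_nonneg.2 ht)]
  rcases le_total 0 a with ha | ha
  · have hMb : max |a| |b| = b := by
      rw [abs_of_nonneg ha, abs_of_nonneg (ha.trans hab), max_eq_right hab]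
    rw [Jq_of_nonneg hq1 ha, Jq_of_nonneg hq1 (ha.trans hab), hMb,
      show q - 2 = q - 1 - 1 by ring]
    exact Real.rpow_sub_rpow_le_mul_sub (by linarith) ha hab
  rcases le_total b 0 with hb | hb
  · have hMa : max |a| |b| = -a := by
      rw [abs_of_nonpos ha, abs_of_nonpos hb, max_eq_left (neg_le_neg hab)]
    rw [hodd ha, hodd hb, hMa, show q - 2 = q - 1 - 1 by ring]
    linarith [Real.rpow_sub_rpow_le_mul_sub (p := q - 1) (by linarith) (neg_nonneg.2 hb)
      (neg_le_neg hab)]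
  set M := max |a| |b|
  have hJb : Jq q b ≤ M ^ (q - 2) * b := by
    rw [Jq, abs_of_nonneg hb]
    exact mul_le_mul_of_nonneg_right
      (Real.rpow_le_rpow hb ((le_abs_self b).trans (le_max_right |a| |b|)) (by linarith)) hb
  have hJa : -Jq q a ≤ M ^ (q - 2) * -a := by
    rw [Jq, ← mul_neg, abs_of_nonpos ha]
    exact mul_le_mul_of_nonneg_right (Real.rpow_le_rpow (neg_nonneg.2 ha)
      ((neg_le_abs a).trans (le_max_left |a| |b|)) (by linarith)) (neg_nonneg.2 ha)
  have hM : 0 ≤ M ^ (q - 2) * (b - a) :=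
    mul_nonneg (Real.rpow_nonneg (le_max_of_le_left (abs_nonneg a)) _) (by linarith)
  nlinarith [mul_nonneg (by linarith : 0 ≤ q - 2) hM]

lemma Jq_sub_Jq_le {q M P a b : ℝ} (hq : 2 ≤ q) (ha : |a| ≤ M) (hb : |b| ≤ M)
    (hP : b - a ≤ P) (hP0 : 0 ≤ P) :
    Jq q b - Jq q a ≤ (q - 1) * M ^ (q - 2) * P := by
  have hM : 0 ≤ M := (abs_nonneg a).trans ha
  rcases le_total b a with hba | hab
  · have hRHS : 0 ≤ (q - 1) * M ^ (q - 2) * P :=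
      mul_nonneg (mul_nonneg (by linarith) (Real.rpow_nonneg hM _)) hP0
    linarith [Jq_monotone (q := q) (by linarith) hba]
  calc Jq q b - Jq q a ≤ (q - 1) * max |a| |b| ^ (q - 2) * (b - a) := Jq_sub_Jq_le_of_le hq hab
    _ ≤ (q - 1) * M ^ (q - 2) * P :=
      mul_le_mul (mul_le_mul_of_nonneg_left (Real.rpow_le_rpow (le_max_of_le_left (abs_nonneg a))
        (max_le ha hb) (by linarith)) (by linarith)) hP (sub_nonneg.2 hab)
        (mul_nonneg (by linarith) (Real.rpow_nonneg hM _))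

lemma pow_sub_pow_le_of_abs_sub_le {g h d : ℝ} (hg : 0 ≤ g) (hh : 0 ≤ h) (hgh : |g - h| ≤ d)
    (m : ℕ) : g ^ m - h ^ m ≤ m * 2 ^ (m - 2) * (h ^ (m - 1) + d ^ (m - 1)) * d := by
  have hd : 0 ≤ d := (abs_nonneg _).trans hgh
  have hmax : max |g| |h| ≤ h + d := by
    rw [abs_of_nonneg hg, abs_of_nonneg hh]
    exact max_le (by linarith [le_abs_self (g - h)]) (by linarith)
  calc g ^ m - h ^ m ≤ |g - h| * m * max |g| |h| ^ (m - 1) :=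
        (le_abs_self _).trans (abs_pow_sub_pow_le g h m)
    _ ≤ d * m * (h + d) ^ (m - 1) := by gcongr
    _ ≤ d * m * (2 ^ (m - 1 - 1) * (h ^ (m - 1) + d ^ (m - 1))) := by
        gcongr
        exact add_pow_le hh hd (m - 1)
    _ = m * 2 ^ (m - 2) * (h ^ (m - 1) + d ^ (m - 1)) * d := by
        rw [Nat.sub_sub]; ring

lemma Real.pow_rpow_sub_one_div {h : ℝ} (hh : 0 ≤ h) {m : ℕ} (hm : m ≠ 0) :
    (h ^ m) ^ (((m : ℝ) - 1) / m) = h ^ (m - 1) := by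
  rw [← Real.rpow_natCast h m, ← Real.rpow_mul hh, mul_div_cancel₀ _ (Nat.cast_ne_zero.2 hm),
    ← Real.rpow_natCast, Nat.cast_sub (Nat.one_le_iff_ne_zero.2 hm), Nat.cast_one]

lemma locPsi_add_sub_le {n m : ℕ} (hm : 2 ≤ m) (ρ₁ R : ℝ) {x z : EuclideanSpace ℝ (Fin n)}
    (hx : ‖x‖ ≤ R) (hz : ‖z‖ ≤ 1) :
    locPsi n ρ₁ m (x + z) - locPsi n ρ₁ m x ≤
      m * 2 ^ (m - 2) * (2 * R + 1) ^ m *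
        (locPsi n ρ₁ m x ^ (((m : ℝ) - 1) / m) * ‖z‖ + ‖z‖ ^ 2) := by
  set h := max (‖x‖ ^ 2 - ρ₁ ^ 2) 0
  set c := 2 * R + 1
  have hR : 0 ≤ R := (norm_nonneg x).trans hx
  have hc : 1 ≤ c := by linarith
  have hh : 0 ≤ h := le_max_right _ _
  have hgh : |max (‖x + z‖ ^ 2 - ρ₁ ^ 2) 0 - h| ≤ c * ‖z‖ := by
    refine (abs_max_sub_max_le_abs _ _ _).trans ?_
    rw [sub_sub_sub_cancel_right, sq_sub_sq, abs_mul]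
    have hsum : |‖x + z‖ + ‖x‖| ≤ c := by
      rw [abs_of_nonneg (by positivity)]
      linarith [norm_add_le x z]
    have hdiff : |‖x + z‖ - ‖x‖| ≤ ‖z‖ := by
      simpa using abs_norm_sub_norm_le (x + z) x
    exact mul_le_mul hsum hdiff (abs_nonneg _) (by linarith)
  have hpow := pow_sub_pow_le_of_abs_sub_le (le_max_right _ _) hh hgh m
  have hm0 : m ≠ 0 := by omega
  rw [locPsi, locPsi, Real.pow_rpow_sub_one_div hh hm0]
  refine hpow.trans ?_
  have hZ := norm_nonneg z
  have hcm : c ≤ c ^ m := le_self_pow₀ hc hm0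
  have hZm : ‖z‖ ^ m ≤ ‖z‖ ^ 2 := pow_le_pow_of_le_one hZ hz hm
  have key : (h ^ (m - 1) + (c * ‖z‖) ^ (m - 1)) * (c * ‖z‖) ≤
      c ^ m * (h ^ (m - 1) * ‖z‖ + ‖z‖ ^ 2) := by
    obtain ⟨k, rfl⟩ : ∃ k, m = k + 1 := ⟨m - 1, by omega⟩
    simp only [Nat.add_sub_cancel, mul_pow, pow_succ] at hcm hZm ⊢
    have := mul_le_mul_of_nonneg_right hcm (mul_nonneg (pow_nonneg hh k) hZ)
    nlinarith [pow_nonneg (by linarith : (0:ℝ) ≤ c) k, pow_nonneg hZ k]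
  calc (m : ℝ) * 2 ^ (m - 2) * (h ^ (m - 1) + (c * ‖z‖) ^ (m - 1)) * (c * ‖z‖)
      = m * 2 ^ (m - 2) * ((h ^ (m - 1) + (c * ‖z‖) ^ (m - 1)) * (c * ‖z‖)) := by ring
    _ ≤ m * 2 ^ (m - 2) * (c ^ m * (h ^ (m - 1) * ‖z‖ + ‖z‖ ^ 2)) := by gcongr
    _ = m * 2 ^ (m - 2) * c ^ m * (h ^ (m - 1) * ‖z‖ + ‖z‖ ^ 2) := by ring

section Annulus

variable {E : Type*} [NormedAddCommGroup E] [MeasurableSpace E] [BorelSpace E]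

lemma integrableOn_rpow_norm_annulus [ProperSpace E] (μ : Measure E)
    [IsFiniteMeasureOnCompacts μ] {r : ℝ} (hr : 0 < r) (R t : ℝ) :
    IntegrableOn (fun z => ‖z‖ ^ t) (ball 0 R \ ball 0 r) μ := by
  refine (ContinuousOn.integrableOn_compact ((isCompact_closedBall 0 R).diff isOpen_ball)
    fun z hz => ?_).mono_set (Set.sdiff_subset_sdiff_left ball_subset_closedBall)
  have hz : r ≤ ‖z‖ := by simpa using hz.2
  exact (continuous_norm.continuousAt.rpow_const (Or.inl (by linarith))).continuousWithinAt

lemma integrableOn_div_rpow_norm_annulus [ProperSpace E] (μ : Measure E)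
    [IsFiniteMeasureOnCompacts μ] {N : E → ℝ} (hN : Measurable N) {B r : ℝ} (hr : 0 < r)
    (R p : ℝ) (hNB : ∀ z ∈ ball 0 R \ ball 0 r, |N z| ≤ B) :
    IntegrableOn (fun z => N z / ‖z‖ ^ p) (ball 0 R \ ball 0 r) μ := by
  have hS : MeasurableSet (ball (0 : E) R \ ball 0 r) := measurableSet_ball.diff measurableSet_ball
  refine IntegrableOn.congr_fun ((integrableOn_rpow_norm_annulus μ hr R (-p)).bdd_mul
    hN.aestronglyMeasurable ((ae_restrict_iff' hS).2 (ae_of_all _ hNB))) (fun z _ => ?_) hS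
  rw [Real.rpow_neg (norm_nonneg z), div_eq_mul_inv]

variable [NormedSpace ℝ E] [FiniteDimensional ℝ E]

lemma setIntegral_rpow_norm_annulus [Nontrivial E] (μ : Measure E) [μ.IsAddHaarMeasure]
    {r R : ℝ} (hr : 0 < r) (hrR : r ≤ R) (t : ℝ) :
    ∫ z in ball 0 R \ ball 0 r, ‖z‖ ^ t ∂μ =
      Module.finrank ℝ E * μ.real (ball 0 1) *
        ∫ ρ in r..R, ρ ^ ((Module.finrank ℝ E : ℝ) - 1 + t) := by
  set d := Module.finrank ℝ E
  have hset : ball (0 : E) R \ ball 0 r = (‖·‖) ⁻¹' Set.Ico r R := by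
    ext z
    simp [and_comm]
  have hradial : ∫ y in Set.Ioi (0 : ℝ), y ^ (d - 1) • (Set.Ico r R).indicator (· ^ t) y =
      ∫ ρ in r..R, ρ ^ ((d : ℝ) - 1 + t) := by
    have hind : (fun y : ℝ => y ^ (d - 1) • (Set.Ico r R).indicator (· ^ t) y) =
        (Set.Ico r R).indicator fun y => y ^ (d - 1) * y ^ t := by
      ext y
      by_cases hy : y ∈ Set.Ico r R <;> simp [hy]
    rw [hind, setIntegral_indicator measurableSet_Ico,
      Set.inter_eq_self_of_subset_right (s := Set.Ioi 0) fun y hy => hr.trans_le hy.1,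
      intervalIntegral.integral_of_le hrR, integral_Ico_eq_integral_Ioo,
      ← integral_Ioc_eq_integral_Ioo]
    refine setIntegral_congr_fun measurableSet_Ioc fun y hy => ?_
    have hy : 0 < y := hr.trans hy.1
    rw [Real.rpow_add hy, ← Real.rpow_natCast, Nat.cast_sub Module.finrank_pos, Nat.cast_one]
  rw [hset, ← integral_indicator (measurableSet_Ico.preimage measurable_norm)]
  have hind : ∀ z : E, ((‖·‖) ⁻¹' Set.Ico r R).indicator (fun z => ‖z‖ ^ t) z =
      (Set.Ico r R).indicator (· ^ t) ‖z‖ :=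
    fun z => Set.indicator_comp_right (g := (· ^ t)) (fun z : E => ‖z‖)
  simp_rw [hind]
  rw [integral_fun_norm_addHaar μ, hradial, nsmul_eq_mul, smul_eq_mul, mul_assoc]

lemma neg_le_setIntegral_div_rpow_norm [Nontrivial E] (μ : Measure E) [μ.IsAddHaarMeasure]
    {N : E → ℝ} {D : Set E} {r R p a b α β : ℝ} (hr : 0 < r) (hrR : r ≤ R)
    (hDS : D ⊆ ball 0 R \ ball 0 r) (hD : MeasurableSet D)
    (hND : IntegrableOn (fun z => N z / ‖z‖ ^ p) D μ) (ha : 0 ≤ a) (hb : 0 ≤ b)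
    (hN : ∀ z ∈ ball 0 R \ ball 0 r, -(a * ‖z‖ ^ α + b * ‖z‖ ^ β) ≤ N z) :
    -(Module.finrank ℝ E * μ.real (ball 0 1) *
        ((a * ∫ ρ in r..R, ρ ^ ((Module.finrank ℝ E : ℝ) - 1 + (α - p))) +
          b * ∫ ρ in r..R, ρ ^ ((Module.finrank ℝ E : ℝ) - 1 + (β - p)))) ≤
      ∫ z in D, N z / ‖z‖ ^ p ∂μ := by
  set S := ball (0 : E) R \ ball 0 r
  set G : E → ℝ := fun z => a * ‖z‖ ^ (α - p) + b * ‖z‖ ^ (β - p)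
  have hG : IntegrableOn G S μ := ((integrableOn_rpow_norm_annulus μ hr R _).const_mul a).add
    ((integrableOn_rpow_norm_annulus μ hr R _).const_mul b)
  have hG0 : ∀ z, 0 ≤ G z := fun z => by positivity
  have hGN : ∀ z ∈ S, -G z ≤ N z / ‖z‖ ^ p := by
    intro z hz
    have hz0 : 0 < ‖z‖ := hr.trans_le (by simpa using hz.2)
    change -(a * ‖z‖ ^ (α - p) + b * ‖z‖ ^ (β - p)) ≤ _
    rw [Real.rpow_sub hz0, Real.rpow_sub hz0, le_div_iff₀ (by positivity)]
    have := hN z hz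
    field_simp
    linarith
  calc _ = -∫ z in S, G z ∂μ := by
        rw [integral_add ((integrableOn_rpow_norm_annulus μ hr R _).const_mul a)
          ((integrableOn_rpow_norm_annulus μ hr R _).const_mul b), integral_const_mul,
          integral_const_mul, setIntegral_rpow_norm_annulus μ hr hrR,
          setIntegral_rpow_norm_annulus μ hr hrR]
        ring
    _ ≤ -∫ z in D, G z ∂μ := neg_le_neg (setIntegral_mono_set hG (ae_of_all _ hG0) hDS.eventuallyLE)
    _ = ∫ z in D, -G z ∂μ := (integral_neg _).symm
    _ ≤ ∫ z in D, N z / ‖z‖ ^ p ∂μ :=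
        setIntegral_mono_on (hG.mono_set hDS).neg hND hD fun z hz => hGN z (hDS hz)

end Annulus

lemma abs_sub_add_le_of_holder {E : Type*} [SeminormedAddCommGroup E] {u : E → ℝ}
    {H κ ρ : ℝ} (hu : ∀ x ∈ closedBall (0 : E) ρ, ∀ y ∈ closedBall (0 : E) ρ,
      |u x - u y| ≤ H * ‖x - y‖ ^ κ) {x z : E} (hxz : ‖x‖ + ‖z‖ ≤ ρ) :
    |u x - u (x + z)| ≤ H * ‖z‖ ^ κ := by
  have hx : x ∈ closedBall (0 : E) ρ := mem_closedBall_zero_iff.2 (by linarith [norm_nonneg z])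
  have hx' : x + z ∈ closedBall (0 : E) ρ :=
    mem_closedBall_zero_iff.2 ((norm_add_le x z).trans hxz)
  simpa using hu x hx (x + z) hx'

lemma abs_Jq_sub_Jq_le_of_holder {E : Type*} [SeminormedAddCommGroup E] {u : E → ℝ}
    {q H κ ρ : ℝ} (hq : 1 < q) (hκ : 0 ≤ κ) (hH : 0 ≤ H)
    (hu : ∀ x ∈ closedBall (0 : E) ρ, ∀ y ∈ closedBall (0 : E) ρ, |u x - u y| ≤ H * ‖x - y‖ ^ κ)
    {x y z : E} (hx : ‖x‖ + ‖z‖ ≤ ρ) (hy : ‖y‖ + ‖z‖ ≤ ρ) (hz : ‖z‖ ≤ 1) :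
    |Jq q (u x - u (x + z)) - Jq q (u y - u (y + z))| ≤ 2 * H ^ (q - 1) := by
  have hHz : H * ‖z‖ ^ κ ≤ H := mul_le_of_le_one_right hH (Real.rpow_le_one (norm_nonneg z) hz hκ)
  exact abs_Jq_sub_Jq_le hq ((abs_sub_add_le_of_holder hu hx).trans hHz)
    ((abs_sub_add_le_of_holder hu hy).trans hHz)

lemma Jq_sub_Jq_le_of_translate_max {n m : ℕ} {q κ m₁ H ρ₁ ρ₂ R : ℝ}
    {u : EuclideanSpace ℝ (Fin n) → ℝ} {xbar ybar z : EuclideanSpace ℝ (Fin n)}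
    (hq : 2 ≤ q) (hκ : 0 ≤ κ) (hm : 2 ≤ m) (hm₁ : 0 < m₁) (hH : 0 ≤ H)
    (hu : ∀ x ∈ closedBall (0 : EuclideanSpace ℝ (Fin n)) ρ₂,
      ∀ y ∈ closedBall (0 : EuclideanSpace ℝ (Fin n)) ρ₂, |u x - u y| ≤ H * ‖x - y‖ ^ κ)
    (hx : ‖xbar‖ + ‖z‖ ≤ ρ₂) (hy : ‖ybar‖ + ‖z‖ ≤ ρ₂) (hxR : ‖xbar‖ ≤ R) (hz : ‖z‖ ≤ 1)
    (hmax : u (xbar + z) - u (ybar + z) - m₁ * locPsi n ρ₁ m (xbar + z) ≤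
      u xbar - u ybar - m₁ * locPsi n ρ₁ m xbar)
    (hpsi : m₁ * locPsi n ρ₁ m xbar ≤ u xbar - u ybar) :
    Jq q (u ybar - u (ybar + z)) - Jq q (u xbar - u (xbar + z)) ≤
      (q - 1) * H ^ (q - 2) * m₁ * (m * 2 ^ (m - 2) * (2 * R + 1) ^ m) *
        (‖z‖ ^ (κ * (q - 2) + 2) +
          (H / m₁) ^ (((m : ℝ) - 1) / m) * ‖xbar - ybar‖ ^ (κ * ((m : ℝ) - 1) / m) *
            ‖z‖ ^ (κ * (q - 2) + 1)) := by
  set w := ‖z‖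
  set Cψ : ℝ := m * 2 ^ (m - 2) * (2 * R + 1) ^ m
  set c := (H / m₁) ^ (((m : ℝ) - 1) / m) * ‖xbar - ybar‖ ^ (κ * ((m : ℝ) - 1) / m)
  have hw : 0 ≤ w := norm_nonneg z
  have hR : 0 ≤ R := (norm_nonneg _).trans hxR
  have hψ0 : 0 ≤ locPsi n ρ₁ m xbar := pow_nonneg (le_max_right _ _) m
  have hψc : locPsi n ρ₁ m xbar ^ (((m : ℝ) - 1) / m) ≤ c := by
    have hxy : u xbar - u ybar ≤ H * ‖xbar - ybar‖ ^ κ :=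
      (le_abs_self _).trans (hu xbar (mem_closedBall_zero_iff.2 (by linarith))
        ybar (mem_closedBall_zero_iff.2 (by linarith)))
    have hψ : locPsi n ρ₁ m xbar ≤ H / m₁ * ‖xbar - ybar‖ ^ κ := by
      rw [div_mul_eq_mul_div, le_div_iff₀ hm₁]
      linarith
    calc _ ≤ (H / m₁ * ‖xbar - ybar‖ ^ κ) ^ (((m : ℝ) - 1) / m) := Real.rpow_le_rpow hψ0 hψ
          (div_nonneg (sub_nonneg.2 (by exact_mod_cast (by omega : 1 ≤ m))) (Nat.cast_nonneg m))
      _ = c := by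
        rw [Real.mul_rpow (by positivity) (by positivity), ← Real.rpow_mul (norm_nonneg _),
          ← mul_div_assoc]
  have hP : (u ybar - u (ybar + z)) - (u xbar - u (xbar + z)) ≤ m₁ * Cψ * (c * w + w ^ 2) := by
    have hψ := locPsi_add_sub_le hm ρ₁ R hxR hz
    have hcw : locPsi n ρ₁ m xbar ^ (((m : ℝ) - 1) / m) * w ≤ c * w :=
      mul_le_mul_of_nonneg_right hψc hw
    have hCψ : 0 ≤ Cψ := by positivity
    nlinarith [mul_le_mul_of_nonneg_left hcw (mul_nonneg hm₁.le hCψ)]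
  calc _ ≤ (q - 1) * (H * w ^ κ) ^ (q - 2) * (m₁ * Cψ * (c * w + w ^ 2)) :=
        Jq_sub_Jq_le hq (abs_sub_add_le_of_holder hu hx) (abs_sub_add_le_of_holder hu hy) hP
          (by positivity)
    _ = _ := by
        have hκq : 0 ≤ κ * (q - 2) := mul_nonneg hκ (by linarith)
        rw [Real.mul_rpow hH (Real.rpow_nonneg hw κ), ← Real.rpow_mul hw,
          Real.rpow_add' hw (by linarith), Real.rpow_add_one' hw (by linarith), Real.rpow_two]
        ring

lemma integrableOn_and_neg_le_setIntegral_of_translate_max {n m : ℕ} {q s κ m₁ H ρ₁ ρ₂ ε₁ : ℝ}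
    {u : EuclideanSpace ℝ (Fin n) → ℝ} {xbar ybar : EuclideanSpace ℝ (Fin n)}
    {D : Set (EuclideanSpace ℝ (Fin n))} (hn : 1 ≤ n) (hq : 2 ≤ q) (hκ : 0 ≤ κ) (hm : 2 ≤ m)
    (hm₁ : 0 < m₁) (hH : 0 ≤ H) (hρ₁ : 1 ≤ ρ₁) (hρ₂ : ρ₂ ≤ 2) (hu : Measurable u)
    (hHold : ∀ x ∈ closedBall (0 : EuclideanSpace ℝ (Fin n)) ρ₂,
      ∀ y ∈ closedBall (0 : EuclideanSpace ℝ (Fin n)) ρ₂, |u x - u y| ≤ H * ‖x - y‖ ^ κ)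
    (hxbar : xbar ∈ ball 0 ((ρ₁ + ρ₂) / 2)) (hybar : ybar ∈ ball 0 ((3 * ρ₂ + ρ₁) / 4))
    (hne : xbar - ybar ≠ 0) (hdist : ‖xbar - ybar‖ < (ρ₂ - ρ₁) / 8)
    (hmax : ∀ z, u (xbar + z) - u (ybar + z) - m₁ * locPsi n ρ₁ m (xbar + z) ≤
      u xbar - u ybar - m₁ * locPsi n ρ₁ m xbar)
    (hpsi : m₁ * locPsi n ρ₁ m xbar ≤ u xbar - u ybar) (hε₁ : ε₁ ∈ Set.Ioo 0 1)
    (hD : MeasurableSet D)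
    (hDS : D ⊆ ball 0 ((ρ₂ - ρ₁) / 4) \ ball 0 (ε₁ * ‖xbar - ybar‖)) :
    IntegrableOn (fun z =>
        (Jq q (u xbar - u (xbar + z)) - Jq q (u ybar - u (ybar + z))) /
          ‖z‖ ^ ((n : ℝ) + s * q)) D ∧
      -(n * volume.real (ball (0 : EuclideanSpace ℝ (Fin n)) 1) *
          ((q - 1) * H ^ (q - 2) * m₁ * (m * 2 ^ (m - 2) * (2 * 2 + 1) ^ m)) *
          ((∫ r in (ε₁ * ‖xbar - ybar‖)..((ρ₂ - ρ₁) / 4), r ^ (κ * (q - 2) + 1 - s * q)) +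
            (H / m₁) ^ (((m : ℝ) - 1) / m) * ‖xbar - ybar‖ ^ (κ * ((m : ℝ) - 1) / m) *
              ∫ r in (ε₁ * ‖xbar - ybar‖)..((ρ₂ - ρ₁) / 4), r ^ (κ * (q - 2) - s * q))) ≤
        ∫ z in D, (Jq q (u xbar - u (xbar + z)) - Jq q (u ybar - u (ybar + z))) /
          ‖z‖ ^ ((n : ℝ) + s * q) := by
  have : Nonempty (Fin n) := ⟨⟨0, hn⟩⟩
  set K : ℝ := (q - 1) * H ^ (q - 2) * m₁ * (m * 2 ^ (m - 2) * (2 * 2 + 1) ^ m)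
  set A := ‖xbar - ybar‖
  set c := (H / m₁) ^ (((m : ℝ) - 1) / m) * A ^ (κ * ((m : ℝ) - 1) / m)
  set S := ball (0 : EuclideanSpace ℝ (Fin n)) ((ρ₂ - ρ₁) / 4) \ ball 0 (ε₁ * A)
  have hA : 0 < A := norm_pos_iff.2 hne
  have hr : 0 < ε₁ * A := mul_pos hε₁.1 hA
  have hrR : ε₁ * A ≤ (ρ₂ - ρ₁) / 4 := by nlinarith [hε₁.2]
  have hxR : ‖xbar‖ ≤ 2 := by linarith [mem_ball_zero_iff.1 hxbar]
  have hS : ∀ z ∈ S, ‖xbar‖ + ‖z‖ ≤ ρ₂ ∧ ‖ybar‖ + ‖z‖ ≤ ρ₂ ∧ ‖z‖ ≤ 1 := fun z hz => by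
    have := mem_ball_zero_iff.1 hz.1
    have := mem_ball_zero_iff.1 hxbar
    have := mem_ball_zero_iff.1 hybar
    exact ⟨by linarith, by linarith, by linarith⟩
  have hN : Measurable fun z => Jq q (u xbar - u (xbar + z)) - Jq q (u ybar - u (ybar + z)) := by
    fun_prop
  have hint := (integrableOn_div_rpow_norm_annulus volume hN hr _ ((n : ℝ) + s * q) fun z hz =>
    have ⟨hx, hy, hz1⟩ := hS z hz
    abs_Jq_sub_Jq_le_of_holder (by linarith) hκ hH hHold hx hy hz1).mono_set hDS
  have hK : 0 ≤ K := mul_nonneg (mul_nonneg (mul_nonneg (by linarith)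
    (Real.rpow_nonneg hH _)) hm₁.le) (by positivity)
  refine ⟨hint, le_trans (le_of_eq ?_) (neg_le_setIntegral_div_rpow_norm volume (a := K)
    (b := K * c) (α := κ * (q - 2) + 2) (β := κ * (q - 2) + 1) hr hrR hDS hD hint hK
    (mul_nonneg hK (by positivity)) fun z hz => ?_)⟩
  · rw [finrank_euclideanSpace_fin,
      show (n : ℝ) - 1 + (κ * (q - 2) + 2 - (n + s * q)) = κ * (q - 2) + 1 - s * q by ring,
      show (n : ℝ) - 1 + (κ * (q - 2) + 1 - (n + s * q)) = κ * (q - 2) - s * q by ring]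
    ring
  · obtain ⟨hx, hy, hz1⟩ := hS z hz
    have : Jq q (u ybar - u (ybar + z)) - Jq q (u xbar - u (xbar + z)) ≤
        K * (‖z‖ ^ (κ * (q - 2) + 2) + c * ‖z‖ ^ (κ * (q - 2) + 1)) :=
      Jq_sub_Jq_le_of_translate_max hq hκ hm hm₁ hH hHold hx hy hxR hz1 (hmax z) hpsi
    linarith

theorem I3_estimate_q_gt_two_general
    (n : ℕ) (hn : 1 ≤ n) (q s κ : ℝ) (m : ℕ) (m₁ H : ℝ)
    (hq : 2 < q) (hκ : κ ∈ Set.Ico (0 : ℝ) 1)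
    (hm : 3 ≤ m) (hm₁ : 0 < m₁) (hH : 0 < H) :
    ∃ κs > (0 : ℝ), ∀ ρ₁ ρ₂ : ℝ, 1 ≤ ρ₁ → ρ₁ < ρ₂ → ρ₂ ≤ 2 →
      ∀ u : EuclideanSpace ℝ (Fin n) → ℝ, Measurable u →
      (∀ x ∈ closedBall (0 : EuclideanSpace ℝ (Fin n)) ρ₂,
        ∀ y ∈ closedBall (0 : EuclideanSpace ℝ (Fin n)) ρ₂,
          |u x - u y| ≤ H * ‖x - y‖ ^ κ) →
      ∀ xbar ∈ ball (0 : EuclideanSpace ℝ (Fin n)) ((ρ₁ + ρ₂) / 2),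
      ∀ ybar ∈ ball (0 : EuclideanSpace ℝ (Fin n)) ((3 * ρ₂ + ρ₁) / 4),
        xbar - ybar ≠ 0 → ‖xbar - ybar‖ < (ρ₂ - ρ₁) / 8 →
        (∀ z : EuclideanSpace ℝ (Fin n),
          u (xbar + z) - u (ybar + z) - m₁ * locPsi n ρ₁ m (xbar + z) ≤
            u xbar - u ybar - m₁ * locPsi n ρ₁ m xbar) →
        m₁ * locPsi n ρ₁ m xbar ≤ u xbar - u ybar →
        ∀ ε₁ ∈ Set.Ioo (0 : ℝ) (1 / 8),
        ∀ D : Set (EuclideanSpace ℝ (Fin n)), MeasurableSet D →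
          D ⊆ ball (0 : EuclideanSpace ℝ (Fin n)) ((ρ₂ - ρ₁) / 4) \
                ball (0 : EuclideanSpace ℝ (Fin n)) (ε₁ * ‖xbar - ybar‖) →
          IntegrableOn (fun z =>
              (Jq q (u xbar - u (xbar + z)) - Jq q (u ybar - u (ybar + z))) /
                ‖z‖ ^ ((n : ℝ) + s * q)) D ∧
          -(κs * ((∫ r in (ε₁ * ‖xbar - ybar‖)..((ρ₂ - ρ₁) / 4),
                r ^ (κ * (q - 2) + 1 - s * q)) +
              ‖xbar - ybar‖ ^ (κ * ((m : ℝ) - 1) / (m : ℝ)) *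
                ∫ r in (ε₁ * ‖xbar - ybar‖)..((ρ₂ - ρ₁) / 4),
                  r ^ (κ * (q - 2) - s * q)))
            ≤ ∫ z in D,
                (Jq q (u xbar - u (xbar + z)) - Jq q (u ybar - u (ybar + z))) /
                  ‖z‖ ^ ((n : ℝ) + s * q) := by
  obtain ⟨hκ, -⟩ := hκ
  set e : ℝ := ((m : ℝ) - 1) / m with he
  set K : ℝ := (q - 1) * H ^ (q - 2) * m₁ * (m * 2 ^ (m - 2) * (2 * 2 + 1) ^ m) with hK
  set cn : ℝ := n * volume.real (ball (0 : EuclideanSpace ℝ (Fin n)) 1) with hcn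
  have hcnK : 0 ≤ cn * K := mul_nonneg (by positivity) (mul_nonneg (mul_nonneg (mul_nonneg
    (by linarith) (Real.rpow_nonneg hH.le _)) hm₁.le) (by positivity))
  refine ⟨cn * K * (1 + (H / m₁) ^ e) + 1, by positivity, ?_⟩
  intro ρ₁ ρ₂ hρ₁ _ hρ₂ u hu hHold xbar hxbar ybar hybar hne hdist hmax hpsi ε₁ hε₁ D hD hDS
  obtain ⟨hint, hle⟩ := integrableOn_and_neg_le_setIntegral_of_translate_max (s := s) hn hq.le hκ
    (by omega) hm₁ hH.le hρ₁ hρ₂ hu hHold hxbar hybar hne hdist hmax hpsi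
    ⟨hε₁.1, by linarith [hε₁.2]⟩ hD hDS
  rw [← he, ← hK, ← hcn] at hle
  refine ⟨hint, le_trans ?_ hle⟩
  have hI (t : ℝ) : 0 ≤ ∫ r in (ε₁ * ‖xbar - ybar‖)..((ρ₂ - ρ₁) / 4), r ^ t :=
    intervalIntegral.integral_nonneg (by nlinarith [norm_nonneg (xbar - ybar), hε₁.2])
      fun r hr => Real.rpow_nonneg ((mul_nonneg hε₁.1.le (norm_nonneg _)).trans hr.1) t
  have hHm : 0 ≤ (H / m₁) ^ e := by positivity
  have hA : 0 ≤ ‖xbar - ybar‖ ^ (κ * ((m : ℝ) - 1) / m) := by positivity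
  nlinarith [mul_nonneg (mul_nonneg hcnK hHm) (hI (κ * (q - 2) + 1 - s * q)),
    mul_nonneg (mul_nonneg hcnK hA) (hI (κ * (q - 2) - s * q)), hI (κ * (q - 2) + 1 - s * q),
    mul_nonneg hA (hI (κ * (q - 2) - s * q))]

/-- **Lemma 2.5 of Section 2** (estimate of `I₃` for `q > 2`). -/
theorem I3_estimate_q_gt_two
    (n : ℕ) (hn : 1 ≤ n) (q s κ : ℝ) (m : ℕ) (m₁ H : ℝ)
    (hq : 2 < q) (hs : s ∈ Set.Ioo (0 : ℝ) 1) (hκ : κ ∈ Set.Ico (0 : ℝ) 1)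
    (hm : 3 ≤ m) (hm₁ : 0 < m₁) (hH : 0 < H) :
    ∃ κs > (0 : ℝ), ∀ ρ₁ ρ₂ : ℝ, 1 ≤ ρ₁ → ρ₁ < ρ₂ → ρ₂ ≤ 2 →
      ∀ u : EuclideanSpace ℝ (Fin n) → ℝ, Measurable u →
      (∀ x ∈ closedBall (0 : EuclideanSpace ℝ (Fin n)) ρ₂,
        ∀ y ∈ closedBall (0 : EuclideanSpace ℝ (Fin n)) ρ₂,
          |u x - u y| ≤ H * ‖x - y‖ ^ κ) →
      ∀ xbar ∈ ball (0 : EuclideanSpace ℝ (Fin n)) ((ρ₁ + ρ₂) / 2),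
      ∀ ybar ∈ ball (0 : EuclideanSpace ℝ (Fin n)) ((3 * ρ₂ + ρ₁) / 4),
        xbar - ybar ≠ 0 → ‖xbar - ybar‖ < (ρ₂ - ρ₁) / 8 →
        (∀ z : EuclideanSpace ℝ (Fin n),
          u (xbar + z) - u (ybar + z) - m₁ * locPsi n ρ₁ m (xbar + z) ≤
            u xbar - u ybar - m₁ * locPsi n ρ₁ m xbar) →
        m₁ * locPsi n ρ₁ m xbar ≤ u xbar - u ybar →
        ∀ ε₁ ∈ Set.Ioo (0 : ℝ) (1 / 8),
        ∀ D : Set (EuclideanSpace ℝ (Fin n)), MeasurableSet D →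
          D ⊆ ball (0 : EuclideanSpace ℝ (Fin n)) ((ρ₂ - ρ₁) / 4) \
                ball (0 : EuclideanSpace ℝ (Fin n)) (ε₁ * ‖xbar - ybar‖) →
          IntegrableOn (fun z =>
              (Jq q (u xbar - u (xbar + z)) - Jq q (u ybar - u (ybar + z))) /
                ‖z‖ ^ ((n : ℝ) + s * q)) D ∧
          -(κs * ((∫ r in (ε₁ * ‖xbar - ybar‖)..((ρ₂ - ρ₁) / 4),
                r ^ (κ * (q - 2) + 1 - s * q)) +
              ‖xbar - ybar‖ ^ (κ * ((m : ℝ) - 1) / (m : ℝ)) *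
                ∫ r in (ε₁ * ‖xbar - ybar‖)..((ρ₂ - ρ₁) / 4),
                  r ^ (κ * (q - 2) - s * q)))
            ≤ ∫ z in D,
                (Jq q (u xbar - u (xbar + z)) - Jq q (u ybar - u (ybar + z))) /
                  ‖z‖ ^ ((n : ℝ) + s * q) :=
  I3_estimate_q_gt_two_general n hn q s κ m m₁ H hq hκ hm hm₁ hH
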